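/- Let F ⊆ F^𝒫 be a parameterization set, let σ be a policy maximizing the value over all policies of the family-MDP M(F), and suppose the parameterization f satisfies Φ(F, σ). Then f ∈ F, V(𝒫(f)) = V(σ), and V(𝒫(f)) ≥ V(𝒫(f')) for every f' ∈ F; i.e., f attains the maximal value within F. Dually, if instead V(σ) ≤ c for some value c, then V(𝒫(f')) ≤ c for every f' ∈ F. -/
import Mathlib


namespace Paper17

open scoped NNReal

/-- A Markov decision process with finite state space `S`, action set `A`,
an initial state, and a partial transition function assigning to (some) state-action
pairs a probability distribution over states. -/
structure MDP (S A : Type) [Fintype S] where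
  init : S
  P : S → A → Option (S → ℝ≥0)
  sum_one : ∀ s a d, P s a = some d → ∑ s', d s' = 1
  avail_nonempty : ∀ s, ∃ a, (P s a).isSome

variable {S A : Type} [Fintype S] [DecidableEq S]

/-- Action `a` is available in state `s`. -/
def MDP.Avail (M : MDP S A) (s : S) (a : A) : Prop := (M.P s a).isSome

/-- A (memoryless deterministic) policy: selects an available action in every state. -/
def MDP.IsPolicy (M : MDP S A) (σ : S → A) : Prop := ∀ s, M.Avail s (σ s)

/-- Transition matrix of the Markov chain induced by policy `σ`. -/
def MDP.trans (M : MDP S A) (σ : S → A) (s s' : S) : ℝ≥0 :=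
  ((M.P s (σ s)).getD fun _ => 0) s'

/-- Probability of reaching the goal set `G` within `n` steps. -/
def reachAux (T : S → S → ℝ≥0) (G : Finset S) : ℕ → S → ℝ≥0
  | 0, s => if s ∈ G then 1 else 0
  | n + 1, s => if s ∈ G then 1 else ∑ s', T s s' * reachAux T G n s'

/-- Probability of reaching the goal set `G` from state `s` in the Markov chain
with transition matrix `T`. -/
noncomputable def reachProb (T : S → S → ℝ≥0) (G : Finset S) (s : S) : ℝ≥0 :=
  ⨆ n, reachAux T G n s

/-- Value of policy `σ`: probability of reaching `G` from the initial state in the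
induced Markov chain. -/
noncomputable def MDP.polValue (M : MDP S A) (G : Finset S) (σ : S → A) : ℝ≥0 :=
  reachProb (M.trans σ) G M.init

/-- Value of the MDP: supremum of policy values. -/
noncomputable def MDP.value (M : MDP S A) (G : Finset S) : ℝ≥0 :=
  ⨆ σ : { σ : S → A // M.IsPolicy σ }, M.polValue G σ.1

/-- A decision tree for an MDP whose states are valuations of the variables in `Var`:
leaves carry actions from `A`, inner nodes carry a state predicate `v ≤ b`
(a variable `v : Var` together with an integer bound `b`); the left subtree
corresponds to states satisfying the predicate, the right subtree to the others. -/
inductive DT (Var A : Type) : Type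
  | leaf (a : A)
  | node (v : Var) (b : ℤ) (l r : DT Var A)

variable {Var A : Type}

/-- Evaluation of a decision tree on a state (valuation): follow the predicates
from the root to a leaf and return the leaf's action. -/
def DT.eval : DT Var A → (Var → ℤ) → A
  | .leaf a, _ => a
  | .node v b l r, s => if s v ≤ b then l.eval s else r.eval s

/-- Depth of a decision tree. -/
def DT.depth : DT Var A → ℕ
  | .leaf _ => 0
  | .node _ _ l r => max l.depth r.depth + 1

/-- `t.IsLeafAt π` holds iff the path `π` (list of booleans; `true` = go left)
leads from the root of `t` to a leaf. -/
def DT.IsLeafAt : DT Var A → List Bool → Prop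
  | .leaf _, [] => True
  | .node _ _ l _, true :: p => l.IsLeafAt p
  | .node _ _ _ r, false :: p => r.IsLeafAt p
  | _, _ => False

/-- The set of states (within the state space `X`) corresponding to the node of the
tree reached by path `π`: the root corresponds to all of `X`, the left child of a node
to the states of the node satisfying its predicate, and the right child to those
not satisfying it.  Invalid paths correspond to `∅`. -/
def DT.statesAt : DT Var A → Set (Var → ℤ) → List Bool → Set (Var → ℤ)
  | _, X, [] => X
  | .node v b l _, X, true :: p => l.statesAt {s ∈ X | s v ≤ b} p
  | .node v b _ r, X, false :: p => r.statesAt {s ∈ X | ¬ s v ≤ b} p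
  | .leaf _, _, _ :: _ => ∅

/-- The skeleton (topology) of a binary tree: the underlying tree `T` of a tree
template, forgetting all labels. -/
inductive Skel : Type
  | leaf
  | node (l r : Skel)

/-- `sk.IsInnerAt π` holds iff the path `π` (`true` = left) leads from the root
to an inner node of the skeleton. -/
def Skel.IsInnerAt : Skel → List Bool → Prop
  | .node _ _, [] => True
  | .node l _, true :: p => l.IsInnerAt p
  | .node _ r, false :: p => r.IsInnerAt p
  | _, _ => False

/-- `sk.IsLeafAt π` holds iff the path `π` leads from the root to a leaf
of the skeleton. -/
def Skel.IsLeafAt : Skel → List Bool → Prop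
  | .leaf, [] => True
  | .node l _, true :: p => l.IsLeafAt p
  | .node _ r, false :: p => r.IsLeafAt p
  | _, _ => False

/-- A parameterization `f = (δ̂, β, α̂)` of a tree template: a variable-selection
function, a bound-selection function (on inner nodes, addressed by root-to-node
paths) and an action-selection function (on leaves). -/
structure Param (Var A : Type) where
  dvar : List Bool → Var
  bound : List Bool → ℤ
  act : List Bool → A

/-- The decision tree `𝒫(f)` instantiated from the skeleton by the
parameterization `f`. -/
def Skel.build : Skel → Param Var A → List Bool → DT Var A
  | .leaf, f, p => .leaf (f.act p)
  | .node l r, f, p =>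
      .node (f.dvar p) (f.bound p) (l.build f (p ++ [true])) (r.build f (p ++ [false]))

/-- A rectangular set of parameterizations `F`. -/
structure FamSet (Var A : Type) where
  dvarS : List Bool → Set Var
  boundS : List Bool → Set ℤ
  actS : List Bool → Set A

/-- `f ∈ F`: the parameterization `f` belongs to the rectangular set `F`. -/
def memF (sk : Skel) (F : FamSet Var A) (f : Param Var A) : Prop :=
  (∀ p, sk.IsInnerAt p → f.dvar p ∈ F.dvarS p ∧ f.bound p ∈ F.boundS p) ∧
  (∀ p, sk.IsLeafAt p → f.act p ∈ F.actS p)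

variable {Var : Type}

/-- The policy induced by a decision tree in the MDP `M` whose states carry the
variable valuations `val`: play the action of the leaf the state is routed to if it
is available, and otherwise fall back to the random action `astar`. -/
def indPol (M : MDP S A) (val : S → Var → ℤ) (astar : A) (t : DT Var A) (s : S) : A :=
  if (M.P s (t.eval (val s))).isSome then t.eval (val s) else astar

/-- The policy induced by the decision tree `𝒫(f)` instantiated from skeleton `sk`
by parameterization `f`. -/
def indOf (M : MDP S A) (val : S → Var → ℤ) (astar : A) (sk : Skel)
    (f : Param Var A) : S → A :=
  indPol M val astar (sk.build f [])

/-- Action `a` is enabled in state `s` in the family-MDP `M(F)`. -/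
def famEnabled (M : MDP S A) (val : S → Var → ℤ) (astar : A) (sk : Skel)
    (F : FamSet Var A) (s : S) (a : A) : Prop :=
  M.Avail s a ∧ ∃ f : Param Var A, memF sk F f ∧ indOf M val astar sk f s = a

/-- `σ` is a policy of the family-MDP `M(F)`. -/
def IsFamPolicy (M : MDP S A) (val : S → Var → ℤ) (astar : A) (sk : Skel)
    (F : FamSet Var A) (σ : S → A) : Prop :=
  ∀ s, famEnabled M val astar sk F s (σ s)

/-- Let `F ⊆ F^𝒫` be a parameterization set, `σ` a policy maximizing
the value over all policies of the family-MDP `M(F)`, and suppose `f` satisfies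
`Φ(F, σ)`, i.e. `f ∈ F` and `σ_{𝒫(f)} = σ`.  Then `f ∈ F`, `V(𝒫(f)) = V(σ)` and `f`
attains the maximal value within `F`.  Dually, whenever `V(σ) ≤ c`, the value of every
`f' ∈ F` is at most `c`. -/
theorem accept_and_prune_correct {S A Var : Type}
    [Fintype S] [DecidableEq S] [Fintype A] [Fintype Var]
    (M : MDP S A) (val : S → Var → ℤ) (astar : A) (hstar : ∀ s, M.Avail s astar)
    (G : Finset S) (sk : Skel) (F : FamSet Var A)
    (hFP : ∀ p, sk.IsInnerAt p → ∀ z ∈ F.boundS p, ∃ s v, z = val s v)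
    (σ : S → A)
    (hσ : IsFamPolicy M val astar sk F σ)
    (hmax : ∀ σ' : S → A, IsFamPolicy M val astar sk F σ' →
      M.polValue G σ' ≤ M.polValue G σ)
    (f : Param Var A)
    (hf : memF sk F f ∧ ∀ s, indOf M val astar sk f s = σ s) :
    (memF sk F f ∧
      M.polValue G (indOf M val astar sk f) = M.polValue G σ ∧
      ∀ f' : Param Var A, memF sk F f' →
        M.polValue G (indOf M val astar sk f') ≤ M.polValue G (indOf M val astar sk f)) ∧
    (∀ c : ℝ≥0, M.polValue G σ ≤ c →
      ∀ f' : Param Var A, memF sk F f' → M.polValue G (indOf M val astar sk f') ≤ c) := by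
  have key : ∀ f' : Param Var A, memF sk F f' →
      IsFamPolicy M val astar sk F (indOf M val astar sk f') := by
    intro f' hf' s
    refine ⟨?_, f', hf', rfl⟩
    unfold indOf indPol
    split
    · assumption
    · exact hstar s
  obtain ⟨hmem, heq⟩ := hf
  have heq' : indOf M val astar sk f = σ := funext heq
  refine ⟨⟨hmem, by rw [heq'], ?_⟩, ?_⟩
  · intro f' hf'
    rw [heq']
    exact hmax _ (key f' hf')
  · intro c hc f' hf'
    exact le_trans (hmax _ (key f' hf')) hc

end Paper17
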